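/- Let (K, π, τ_K) be a real coisotropic quantum right subgroup of F and ρ_L a unitary left corepresentation of K on the inner product space V with orthonormal basis {e_i} (unitarity: τ_K(b_{ij}) = b_{ji}). Then for all A = Σ_i A_i⊗e_i and B = Σ_i B_i⊗e_i in ind_K^G(ρ_L), the element ⟨A,B⟩_R := Σ_i B_i A_i* belongs to B^π. -/

import Mathlib

open scoped TensorProduct
open Coalgebra

noncomputable section

variable {F : Type*} [Ring F] [HopfAlgebra ℂ F] [StarRing F] [StarModule ℂ F]
variable {K : Type*} [AddCommGroup K] [Module ℂ K] [Coalgebra ℂ K]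
variable {V : Type*} [AddCommGroup V] [Module ℂ V]

/-- The right quantum homogeneous space `B^π = {a | (id ⊗ π)(Δ a) = a ⊗ π(1)}`,
as a subspace of `F`. -/
def BpiR (π : F →ₗ[ℂ] K) : Submodule ℂ F :=
  LinearMap.ker ((LinearMap.lTensor F π ∘ₗ Coalgebra.comul) - (TensorProduct.mk ℂ F K).flip (π 1))

/-- The induced space `ind_K^G(ρ_L) = {A ∈ F ⊗ V | (R ⊗ id)A = (id ⊗ ρ_L)A}`,
where `R = (id ⊗ π) ∘ Δ`. -/
def indKR (π : F →ₗ[ℂ] K) (ρL : V →ₗ[ℂ] K ⊗[ℂ] V) : Submodule ℂ (F ⊗[ℂ] V) :=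
  LinearMap.ker ((TensorProduct.assoc ℂ F K V).toLinearMap ∘ₗ
      LinearMap.rTensor V (LinearMap.lTensor F π ∘ₗ Coalgebra.comul)
    - LinearMap.lTensor F ρL)

/-!
Write `R = (id ⊗ π) ∘ Δ`. Because `π (a * b) = π a • b`, `R (x * y) = Σ x₍₁₎ y₍₁₎ ⊗ π x₍₂₎ • y₍₂₎`,
so the induction property of `B` gives
`R (Σᵢ Bᵢ Aᵢ*) = Σⱼ (Bⱼ ⊗ 1) · Σᵢ (Aᵢ*)₍₁₎ ⊗ bᵢⱼ • (Aᵢ*)₍₂₎`.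
Unitarity `bᵢⱼ = τ_K bⱼᵢ`, together with `τ_K ∘ π = π ∘ * ∘ S` and the induction property of `A`,
turns `Σᵢ Aᵢ* ⊗ bᵢⱼ` into `Σ (Aⱼ)₍₁₎* ⊗ π (S (Aⱼ)₍₂₎)*`. Applying `a ⊗ k ↦ Σ a₍₁₎ ⊗ k • a₍₂₎` and
the antipode identity `Σ a₍₁₎ ⊗ a₍₂₎ S a₍₃₎ = a ⊗ 1` yields
`Σᵢ (Aᵢ*)₍₁₎ ⊗ bᵢⱼ • (Aᵢ*)₍₂₎ = Aⱼ* ⊗ π 1`, hence `R (Σᵢ Bᵢ Aᵢ*) = (Σⱼ Bⱼ Aⱼ*) ⊗ π 1`.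
-/

universe w

open TensorProduct LinearMap HopfAlgebra

section StarComul

variable {R A : Type*} [CommSemiring R] [StarRing R] [AddCommMonoid A] [StarAddMonoid A]
  [Module R A] [StarModule R A] [Coalgebra R A]

/- The hypothesis only quantifies over index types in the universe `w`, hence the reindexing by
`ULift (Fin n)`. -/
theorem Coalgebra.comul_star_of_repr
    (h : ∀ (a : A) (κ : Type w) (r : Coalgebra.Repr R a κ),
      comul (star a) = ∑ i ∈ r.index, star (r.left i) ⊗ₜ[R] star (r.right i)) (a : A) :
    comul (R := R) (star a) = star (comul a) := by
  obtain ⟨n, l, r, hlr⟩ := exists_sum_tmul_eq (comul (R := R) a)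
  have sum_ulift (g : Fin n → A ⊗[R] A) : ∑ i : ULift.{w} (Fin n), g i.down = ∑ j, g j :=
    Equiv.ulift.sum_comp g
  calc comul (star a) = ∑ i : ULift.{w} (Fin n), star (l i.down) ⊗ₜ[R] star (r i.down) :=
        h a _ ⟨Finset.univ, l ∘ ULift.down, r ∘ ULift.down, (sum_ulift _).trans hlr.symm⟩
    _ = star (comul a) := by
      rw [sum_ulift fun j => star (l j) ⊗ₜ[R] star (r j), hlr, star_sum]; rfl

end StarComul

section ModuleCoaction

variable {R A M : Type*} [CommSemiring R] [Semiring A] [Algebra R A] [AddCommMonoid M]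
  [Module R M] (act : M →ₗ[R] A →ₗ[R] M)

theorem lTensor_mul_eq_map₂ {f : A →ₗ[R] M} (hf : ∀ a b, act (f a) b = f (a * b))
    (u v : A ⊗[R] A) : lTensor A f (u * v) = map₂ (mul R A) act (lTensor A f u) v := by
  induction u with
  | zero => simp
  | add u u' hu hu' => simp [add_mul, hu, hu']
  | tmul a c =>
    induction v with
    | zero => simp
    | add v v' hv hv' => simp [mul_add, hv, hv']
    | tmul b d => simp [map₂_apply_tmul, hf]

theorem map₂_mul_tmul_eq_rTensor_mulLeft (b : A) (m : M) (v : A ⊗[R] A) :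
    map₂ (mul R A) act (b ⊗ₜ m) v = rTensor M (mulLeft R b) (map₂ (mul R A) act (1 ⊗ₜ m) v) := by
  induction v with
  | zero => simp
  | add v v' hv hv' => simp only [map_add, hv, hv']
  | tmul c d => simp [map₂_apply_tmul]

end ModuleCoaction

section ActComul

variable {R A M : Type*} [CommSemiring R] [Semiring A] [Bialgebra R A] [AddCommMonoid M]
  [Module R M] (act : M →ₗ[R] A →ₗ[R] M)

/-- `a ⊗ m ↦ Σ a₍₁₎ ⊗ m • a₍₂₎`. -/
def actComul : A ⊗[R] M →ₗ[R] A ⊗[R] M :=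
  lift ((map₂ (mul R A) act).compl₁₂ (mk R A M 1) comul).flip

theorem actComul_tmul (a : A) (m : M) :
    actComul act (a ⊗ₜ m) = map₂ (mul R A) act (1 ⊗ₜ m) (comul a) := rfl

end ActComul

section Hopf

variable {R A : Type*} [CommSemiring R] [Semiring A] [HopfAlgebra R A]

theorem HopfAlgebra.lTensor_mul_antipode_assoc_rTensor_comul (a : A) :
    lTensor A (mul' R A ∘ₗ lTensor A (antipode R))
      (TensorProduct.assoc R A A A (rTensor A comul (comul a))) = a ⊗ₜ 1 := by
  rw [Coalgebra.coassoc_apply, ← lTensor_comp_apply, comp_assoc, mul_antipode_lTensor_comul,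
    lTensor_comp_apply, Coalgebra.lTensor_counit_comul]
  simp

end Hopf

section StarHopf

variable {R A M : Type*} [CommSemiring R] [StarRing R] [Semiring A] [HopfAlgebra R A]
  [StarRing A] [StarModule R A] [AddCommMonoid M] [Module R M]
  {act : M →ₗ[R] A →ₗ[R] M} {π : A →ₗ[R] M} {τ : M →ₗ⋆[R] M}

theorem map_star_lTensor_eq_lTensor_star_antipode (hτ : ∀ a, τ (π a) = π (star (antipode R a)))
    (u : A ⊗[R] A) :
    TensorProduct.map (starLinearEquiv R (A := A)).toLinearMap τ (lTensor A π u)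
      = lTensor A π (star (lTensor A (antipode R) u)) := by
  induction u with
  | zero => simp
  | add u u' hu hu' => simp only [map_add, star_add, hu, hu']
  | tmul x y => simp [hτ]

theorem actComul_lTensor_star_lTensor_antipode
    (hstar : ∀ a : A, comul (R := R) (star a) = star (comul a))
    (hact : ∀ a b, act (π a) b = π (a * b)) (u : A ⊗[R] A) :
    actComul act (lTensor A π (star (lTensor A (antipode R) u)))
      = lTensor A π (star (lTensor A (mul' R A ∘ₗ lTensor A (antipode R))
          (TensorProduct.assoc R A A A (rTensor A comul u)))) := by
  induction u with
  | zero => simp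
  | add u u' hu hu' => simp only [map_add, star_add, hu, hu']
  | tmul x y =>
    simp only [lTensor_tmul, star_tmul, actComul_tmul, hstar, rTensor_tmul]
    induction comul (R := R) x with
    | zero => simp
    | add v v' hv hv' => simp only [map_add, star_add, add_tmul, hv, hv']
    | tmul p q => simp [map₂_apply_tmul, hact]

theorem actComul_map_star_lTensor_comul
    (hstar : ∀ a : A, comul (R := R) (star a) = star (comul a))
    (hact : ∀ a b, act (π a) b = π (a * b)) (hτ : ∀ a, τ (π a) = π (star (antipode R a)))
    (a : A) :
    actComul act
        (TensorProduct.map (starLinearEquiv R (A := A)).toLinearMap τ (lTensor A π (comul a)))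
      = star a ⊗ₜ π 1 := by
  rw [map_star_lTensor_eq_lTensor_star_antipode hτ,
    actComul_lTensor_star_lTensor_antipode hstar hact,
    HopfAlgebra.lTensor_mul_antipode_assoc_rTensor_comul]
  simp

theorem sum_map₂_one_tmul_comul_star {ι : Type*} [Fintype ι]
    (hstar : ∀ a : A, comul (R := R) (star a) = star (comul a))
    (hact : ∀ a b, act (π a) b = π (a * b)) (hτ : ∀ a, τ (π a) = π (star (antipode R a)))
    {b : ι → ι → M} (hb : ∀ i j, τ (b i j) = b j i)
    {x : ι → A} (hx : ∀ i, lTensor A π (comul (x i)) = ∑ j, x j ⊗ₜ b i j) (j : ι) :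
    ∑ i, map₂ (mul R A) act (1 ⊗ₜ b i j) (comul (star (x i))) = star (x j) ⊗ₜ π 1 := by
  calc ∑ i, map₂ (mul R A) act (1 ⊗ₜ b i j) (comul (star (x i)))
      = actComul act (∑ i, star (x i) ⊗ₜ b i j) := by simp [map_sum, actComul_tmul]
    _ = actComul act (TensorProduct.map (starLinearEquiv R (A := A)).toLinearMap τ
          (lTensor A π (comul (x j)))) := by rw [hx j, map_sum]; simp [hb]
    _ = star (x j) ⊗ₜ π 1 := actComul_map_star_lTensor_comul hstar hact hτ (x j)

end StarHopf

theorem statement16_general {ι : Type*} [Fintype ι]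
    (hcomul_star : ∀ (a : F) (κ : Type*) (r : Coalgebra.Repr ℂ a κ),
      Coalgebra.comul (star a) = ∑ i ∈ r.index, star (r.left i) ⊗ₜ[ℂ] star (r.right i))
    (π : F →ₗ[ℂ] K)
    (act : K →ₗ[ℂ] F →ₗ[ℂ] K)
    (hact_π : ∀ a b : F, act (π a) b = π (a * b))
    (τK : K → K)
    (hτK_add : ∀ x y : K, τK (x + y) = τK x + τK y)
    (hτK_smul : ∀ (c : ℂ) (x : K), τK (c • x) = (starRingEnd ℂ) c • τK x)
    (hτK_π : ∀ a : F, τK (π a) = π (star (HopfAlgebra.antipode (R := ℂ) a)))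
    (b : Module.Basis ι ℂ V) (bMat : ι → ι → K)
    (hunit : ∀ i j : ι, τK (bMat i j) = bMat j i)
    (Acomp Bcomp : ι → F)
    (hA : ∀ i : ι, LinearMap.lTensor F π (Coalgebra.comul (Acomp i))
      = ∑ j : ι, Acomp j ⊗ₜ[ℂ] bMat i j)
    (hB : ∀ i : ι, LinearMap.lTensor F π (Coalgebra.comul (Bcomp i))
      = ∑ j : ι, Bcomp j ⊗ₜ[ℂ] bMat i j) :
    (∑ i : ι, Bcomp i * star (Acomp i)) ∈ BpiR π := by
  have hstar := Coalgebra.comul_star_of_repr hcomul_star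
  let τ : K →ₗ⋆[ℂ] K := { toFun := τK, map_add' := hτK_add, map_smul' := hτK_smul }
  have hAstar := sum_map₂_one_tmul_comul_star (τ := τ) hstar hact_π hτK_π hunit hA
  rw [BpiR, LinearMap.mem_ker, LinearMap.sub_apply, LinearMap.comp_apply, sub_eq_zero]
  calc lTensor F π (comul (∑ i, Bcomp i * star (Acomp i)))
      = ∑ i, map₂ (mul ℂ F) act (lTensor F π (comul (Bcomp i))) (comul (star (Acomp i))) := by
        simp only [map_sum, Bialgebra.comul_mul, lTensor_mul_eq_map₂ act hact_π]
    _ = ∑ j, rTensor K (mulLeft ℂ (Bcomp j))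
          (∑ i, map₂ (mul ℂ F) act (1 ⊗ₜ bMat i j) (comul (star (Acomp i)))) := by
        simp only [hB, map_sum, LinearMap.sum_apply]
        rw [Finset.sum_comm]
        exact Finset.sum_congr rfl fun j _ => Finset.sum_congr rfl fun i _ =>
          map₂_mul_tmul_eq_rTensor_mulLeft act _ _ _
    _ = (∑ i, Bcomp i * star (Acomp i)) ⊗ₜ π 1 := by
        simp only [hAstar, rTensor_tmul, mulLeft_apply, sum_tmul]

/-- For a unitary left corepresentation `ρ_L` of a right coisotropic quantum subgroup and
`A, B ∈ ind_K^G(ρ_L)`, the element `⟨A,B⟩_R = Σ_i B_i A_i*` lies in `B^π`. -/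
theorem statement16 {ι : Type*} [Fintype ι]
    (hcomul_star : ∀ (a : F) (κ : Type*) (r : Coalgebra.Repr ℂ a κ),
      Coalgebra.comul (star a) = ∑ i ∈ r.index, star (r.left i) ⊗ₜ[ℂ] star (r.right i))
    (hcounit_star : ∀ a : F, (Coalgebra.counit (star a) : ℂ) = starRingEnd ℂ (Coalgebra.counit a))
    (hSbij : Function.Bijective (HopfAlgebra.antipode (R := ℂ) (A := F)))
    (π : F →ₗ[ℂ] K) (hπsurj : Function.Surjective π)
    (hπcomul : ∀ a : F, Coalgebra.comul (π a) = TensorProduct.map π π (Coalgebra.comul a))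
    (hπcounit : ∀ a : F, (Coalgebra.counit (π a) : ℂ) = (Coalgebra.counit a : ℂ))
    (act : K →ₗ[ℂ] F →ₗ[ℂ] K)
    (hact_one : ∀ k : K, act k 1 = k)
    (hact_mul : ∀ (k : K) (a b : F), act k (a * b) = act (act k a) b)
    (hact_π : ∀ a b : F, act (π a) b = π (a * b))
    (τK : K → K)
    (hτK_add : ∀ x y : K, τK (x + y) = τK x + τK y)
    (hτK_smul : ∀ (c : ℂ) (x : K), τK (c • x) = (starRingEnd ℂ) c • τK x)
    (hτK_π : ∀ a : F, τK (π a) = π (star (HopfAlgebra.antipode (R := ℂ) a)))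
    (Sinv : F →ₗ[ℂ] F)
    (hSinv₁ : ∀ a : F, Sinv (HopfAlgebra.antipode (R := ℂ) a) = a)
    (hSinv₂ : ∀ a : F, HopfAlgebra.antipode (R := ℂ) (Sinv a) = a)
    (ρL : V →ₗ[ℂ] K ⊗[ℂ] V)
    (hρ_counit : ∀ v : V,
      (TensorProduct.lid ℂ V) (LinearMap.rTensor V Coalgebra.counit (ρL v)) = v)
    (hρ_coassoc : ∀ v : V, (TensorProduct.assoc ℂ K K V).symm (LinearMap.lTensor K ρL (ρL v))
        = LinearMap.rTensor V Coalgebra.comul (ρL v))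
    (b : Module.Basis ι ℂ V) (bMat : ι → ι → K)
    (hρmat : ∀ i : ι, ρL (b i) = ∑ j : ι, bMat i j ⊗ₜ[ℂ] b j)
    (hunit : ∀ i j : ι, τK (bMat i j) = bMat j i)
    (Acomp Bcomp : ι → F)
    (hA : ∀ i : ι, LinearMap.lTensor F π (Coalgebra.comul (Acomp i))
      = ∑ j : ι, Acomp j ⊗ₜ[ℂ] bMat i j)
    (hB : ∀ i : ι, LinearMap.lTensor F π (Coalgebra.comul (Bcomp i))
      = ∑ j : ι, Bcomp j ⊗ₜ[ℂ] bMat i j) :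
    (∑ i : ι, Bcomp i * star (Acomp i)) ∈ BpiR π :=
  statement16_general hcomul_star π act hact_π τK hτK_add hτK_smul hτK_π b bMat hunit Acomp Bcomp hA
    hB
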